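/- arXiv:2406.12289 — 3 statements merged into one kernel-verified Lean document; each statement's English description precedes it below -/
import Mathlib

section
/- Let P and Q be nonempty polyhedra in ℝ^n (each a finite intersection of closed half-spaces) with dist(P, Q) = 0, i.e. inf{‖p − q‖ : p ∈ P, q ∈ Q} = 0. Then P ∩ Q ≠ ∅. -/
/-!
If `P ∩ Q = ∅`, the joint system `A x ≤ b`, `B x ≤ c` is infeasible, so Farkas' lemma gives
`u, v ≥ 0` with `uᵀA + vᵀB = 0` and `u ⬝ b + v ⬝ c < 0`. The functional `x ↦ uᵀA x` is then at
most `u ⬝ b` on `P` and at least `-(v ⬝ c)` on `Q`, so `‖p - q‖` is bounded below by the positive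
gap divided by the norm of that functional.

Farkas' lemma is Hahn–Banach separation from a finitely generated cone, which is closed: by the
conic Carathéodory theorem it is a finite union of cones over linearly independent families, each
the image of an orthant under an injective linear map.
-/
open Set Function

namespace PointedCone
variable {ι E : Type*} [Fintype ι] [AddCommGroup E] [Module ℝ E]

lemma mem_hull_range_iff {v : ι → E} {x : E} :
    x ∈ hull ℝ (range v) ↔ ∃ c : ι → ℝ, 0 ≤ c ∧ ∑ i, c i • v i = x := by
  rw [hull, Submodule.mem_span_range_iff_exists_fun]
  constructor
  · rintro ⟨c, rfl⟩
    exact ⟨fun i => c i, fun i => (c i).2, rfl⟩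
  · rintro ⟨c, hc, rfl⟩
    exact ⟨fun i => ⟨c i, hc i⟩, rfl⟩

lemma exists_nonneg_support_ssubset_of_not_linearIndepOn {v : ι → E} {c : ι → ℝ} (hc : 0 ≤ c)
    (h : ¬LinearIndepOn ℝ v (support c)) :
    ∃ c' : ι → ℝ, 0 ≤ c' ∧ support c' ⊂ support c ∧ ∑ i, c' i • v i = ∑ i, c i • v i := by
  classical
  obtain ⟨g, hg_supp, hg_rel, i₁, hg_i₁⟩ : ∃ g : ι → ℝ,
      support g ⊆ support c ∧ ∑ i, g i • v i = 0 ∧ ∃ i, 0 < g i := by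
    rw [linearIndepOn_iff''] at h
    push Not at h
    obtain ⟨t, g, hts, hgt, hrel, i, -, hgi⟩ := h
    have hsum : ∑ i, g i • v i = 0 := by
      rwa [← Finset.sum_subset t.subset_univ fun j _ hj => by rw [hgt j hj, zero_smul]]
    have hsupp : support g ⊆ support c := fun j hj => hts (by_contra fun hjt => hj (hgt j hjt))
    rcases hgi.lt_or_gt with hneg | hpos
    · exact ⟨-g, by rwa [support_neg], by simp [hsum], i, by simpa using hneg⟩
    · exact ⟨g, hsupp, hsum, i, hpos⟩
  -- `t` below is the largest step along `-g` that keeps `c - t • g` nonnegative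
  obtain ⟨i₀, hi₀, hmin⟩ := Finset.exists_min_image (Finset.univ.filter (0 < g ·))
    (fun i => c i / g i) ⟨i₁, by simpa using hg_i₁⟩
  replace hi₀ : 0 < g i₀ := by simpa using hi₀
  set t := c i₀ / g i₀
  refine ⟨c - t • g, fun i => ?_, ?_, ?_⟩
  · by_cases hgi : 0 < g i
    · simpa using (le_div_iff₀ hgi).mp (hmin i (by simpa using hgi))
    · have : t * g i ≤ 0 :=
        mul_nonpos_of_nonneg_of_nonpos (div_nonneg (hc i₀) hi₀.le) (not_lt.mp hgi)
      have hci : 0 ≤ c i := hc i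
      simp only [Pi.sub_apply, Pi.smul_apply, smul_eq_mul, Pi.zero_apply]
      linarith
  · refine ssubset_of_subset_not_subset (fun i hi => ?_) fun hsub => ?_
    · by_contra hci
      have hgi : g i = 0 := notMem_support.mp fun h' => hci (hg_supp h')
      simp [notMem_support.mp hci, hgi] at hi
    · have : (c - t • g) i₀ = 0 := by simp [t, hi₀.ne']
      exact hsub (hg_supp hi₀.ne') this
  · simp [sub_smul, Finset.sum_sub_distrib, mul_smul, ← Finset.smul_sum, hg_rel]

theorem exists_nonneg_linearIndepOn_support (v : ι → E) {c : ι → ℝ} (hc : 0 ≤ c) :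
    ∃ c' : ι → ℝ, 0 ≤ c' ∧ LinearIndepOn ℝ v (support c') ∧
      ∑ i, c' i • v i = ∑ i, c i • v i := by
  induction hn : (support c).ncard using Nat.strong_induction_on generalizing c with
  | _ n ih =>
  by_cases h : LinearIndepOn ℝ v (support c)
  · exact ⟨c, hc, h, rfl⟩
  obtain ⟨c', hc', hlt, hsum⟩ := exists_nonneg_support_ssubset_of_not_linearIndepOn hc h
  obtain ⟨c'', hc'', hind, hsum'⟩ := ih _ (hn ▸ ncard_lt_ncard hlt (toFinite _)) hc' rfl
  exact ⟨c'', hc'', hind, hsum'.trans hsum⟩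

lemma coe_hull_range_eq_iUnion_linearIndepOn (v : ι → E) :
    (hull ℝ (range v) : Set E) =
      ⋃ (s : Set ι) (_ : LinearIndepOn ℝ v s), (hull ℝ (v '' s) : Set E) := by
  refine Subset.antisymm (fun x hx => ?_)
    (iUnion₂_subset fun s _ => Submodule.span_mono (image_subset_range v s))
  obtain ⟨c, hc, rfl⟩ := mem_hull_range_iff.mp hx
  obtain ⟨c', hc', hind, hsum⟩ := exists_nonneg_linearIndepOn_support v hc
  refine mem_iUnion₂.mpr ⟨support c', hind, hsum ▸ Submodule.sum_mem _ fun i _ => ?_⟩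
  by_cases hi : c' i = 0
  · simp [hi]
  · exact (hull ℝ _).smul_mem (hc' i) (subset_hull (mem_image_of_mem v hi))

section Topology
variable [TopologicalSpace E] [IsTopologicalAddGroup E] [ContinuousSMul ℝ E] [T2Space E]

lemma isClosed_hull_range_of_linearIndependent {w : ι → E} (hw : LinearIndependent ℝ w) :
    IsClosed (hull ℝ (range w) : Set E) := by
  have himage : (hull ℝ (range w) : Set E) = Fintype.linearCombination ℝ w '' Ici 0 := by
    ext x
    simp [mem_hull_range_iff, Fintype.linearCombination_apply]
  rw [himage]
  exact (LinearMap.isClosedEmbedding_of_injective (LinearMap.ker_eq_bot.mpr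
    hw.fintypeLinearCombination_injective)).isClosedMap _ isClosed_Ici

theorem isClosed_hull_range [FiniteDimensional ℝ E] (v : ι → E) :
    IsClosed (hull ℝ (range v) : Set E) := by
  classical
  rw [coe_hull_range_eq_iUnion_linearIndepOn]
  refine isClosed_iUnion_of_finite fun s => isClosed_iUnion_of_finite fun hs => ?_
  rw [image_eq_range]
  exact isClosed_hull_range_of_linearIndependent hs

end Topology

end PointedCone

open PointedCone Matrix

theorem Matrix.exists_nonneg_vecMul_eq_zero_dotProduct_neg {m n : Type*} [Fintype m] [Fintype n]
    (M : Matrix m n ℝ) (d : m → ℝ) (h : ¬∃ x, M *ᵥ x ≤ d) :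
    ∃ y, 0 ≤ y ∧ y ᵥ* M = 0 ∧ y ⬝ᵥ d < 0 := by
  classical
  -- `gen` generates the cone `{M x + z | 0 ≤ z}`
  let gen : m ⊕ (n ⊕ n) → (m → ℝ) :=
    Sum.elim (Pi.single · 1) (Sum.elim (fun j => Mᵀ j) (fun j => -Mᵀ j))
  have hd : d ∉ hull ℝ (range gen) := by
    intro hd
    obtain ⟨c, hc, hcd⟩ := mem_hull_range_iff.mp hd
    refine h ⟨fun j => c (.inr (.inl j)) - c (.inr (.inr j)), fun i => ?_⟩
    have := congrFun hcd i
    simp [gen, Fintype.sum_sum_type, mulVec, dotProduct, Pi.single_apply, mul_sub, mul_comm]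
      at this ⊢
    have hci : 0 ≤ c (.inl i) := hc _
    linarith
  obtain ⟨f, hf, hfd⟩ :=
    ProperCone.hyperplane_separation_point ⟨hull ℝ (range gen), isClosed_hull_range gen⟩ hd
  have hfgen : ∀ k, 0 ≤ f (gen k) := fun k => hf _ (subset_hull (mem_range_self k))
  set y : m → ℝ := fun i => f (Pi.single i 1)
  have hf_apply : ∀ z, f z = y ⬝ᵥ z := fun z => by
    conv_lhs => rw [pi_eq_sum_univ' z]
    simp [y, dotProduct, mul_comm]
  refine ⟨y, fun i => hfgen (.inl i), funext fun j => ?_, hf_apply d ▸ hfd⟩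
  have h1 := hfgen (.inr (.inl j))
  have h2 := hfgen (.inr (.inr j))
  simp only [gen, Sum.elim_inr, Sum.elim_inl, hf_apply, dotProduct_neg, neg_nonneg] at h1 h2
  exact le_antisymm h2 h1

lemma sInf_norm_sub_pos_of_separated {E : Type*} [SeminormedAddCommGroup E] [NormedSpace ℝ E]
    {S T : Set E} (hS : S.Nonempty) (hT : T.Nonempty) (f : StrongDual ℝ E) {δ : ℝ} (hδ : 0 < δ)
    (hsep : ∀ p ∈ S, ∀ q ∈ T, δ ≤ f (q - p)) :
    0 < sInf {d : ℝ | ∃ p ∈ S, ∃ q ∈ T, d = ‖p - q‖} := by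
  have hbound : ∀ p ∈ S, ∀ q ∈ T, δ ≤ ‖f‖ * ‖p - q‖ := fun p hp q hq =>
    calc δ ≤ f (q - p) := hsep p hp q hq
      _ ≤ ‖f (q - p)‖ := Real.le_norm_self _
      _ ≤ ‖f‖ * ‖q - p‖ := f.le_opNorm _
      _ = ‖f‖ * ‖p - q‖ := by rw [norm_sub_rev]
  obtain ⟨p₀, hp₀⟩ := hS
  obtain ⟨q₀, hq₀⟩ := hT
  have hf : 0 < ‖f‖ := by
    by_contra! hf
    have := hbound p₀ hp₀ q₀ hq₀
    nlinarith [norm_nonneg f, norm_nonneg (p₀ - q₀)]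
  refine (div_pos hδ hf).trans_le (le_csInf ⟨_, p₀, hp₀, q₀, hq₀, rfl⟩ ?_)
  rintro _ ⟨p, hp, q, hq, rfl⟩
  rw [div_le_iff₀' hf]
  exact hbound p hp q hq

theorem stmt6 (n k l : ℕ)
    (A : Matrix (Fin k) (Fin n) ℝ) (b : Fin k → ℝ)
    (B : Matrix (Fin l) (Fin n) ℝ) (c : Fin l → ℝ)
    (hP : {x : Fin n → ℝ | A.mulVec x ≤ b}.Nonempty)
    (hQ : {x : Fin n → ℝ | B.mulVec x ≤ c}.Nonempty)
    (hdist : sInf {d : ℝ | ∃ p ∈ {x : Fin n → ℝ | A.mulVec x ≤ b},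
        ∃ q ∈ {x : Fin n → ℝ | B.mulVec x ≤ c}, d = ‖p - q‖} = 0) :
    ({x : Fin n → ℝ | A.mulVec x ≤ b} ∩ {x : Fin n → ℝ | B.mulVec x ≤ c}).Nonempty := by
  by_contra hPQ
  obtain ⟨y, hy, hyM, hyd⟩ := (fromRows A B).exists_nonneg_vecMul_eq_zero_dotProduct_neg
    (Sum.elim b c) fun ⟨x, hx⟩ => hPQ ⟨x, by simpa [Sum.elim_le_elim_iff] using hx⟩
  rw [vecMul_fromRows] at hyM
  rw [← Sum.elim_comp_inl_inr y, sumElim_dotProduct_sumElim] at hyd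
  set u := y ∘ Sum.inl
  set v := y ∘ Sum.inr
  have hsep : ∀ p ∈ {x : Fin n → ℝ | A *ᵥ x ≤ b}, ∀ q ∈ {x : Fin n → ℝ | B *ᵥ x ≤ c},
      -(u ⬝ᵥ b + v ⬝ᵥ c) ≤ (u ᵥ* A) ⬝ᵥ (q - p) := fun p hp q hq => by
    have hp' : (u ᵥ* A) ⬝ᵥ p ≤ u ⬝ᵥ b := by
      rw [← dotProduct_mulVec]
      exact dotProduct_le_dotProduct_of_nonneg_left hp fun _ => hy _
    have hq' : -(v ⬝ᵥ c) ≤ (u ᵥ* A) ⬝ᵥ q := by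
      rw [eq_neg_of_add_eq_zero_left hyM, neg_dotProduct, ← dotProduct_mulVec]
      exact neg_le_neg (dotProduct_le_dotProduct_of_nonneg_left hq fun _ => hy _)
    rw [dotProduct_sub]
    linarith
  exact (sInf_norm_sub_pos_of_separated hP hQ
    (LinearMap.toContinuousLinearMap (dotProductEquiv ℝ (Fin n) (u ᵥ* A)))
    (neg_pos.mpr hyd) hsep).ne' hdist
end

section
/- Let g : ℝ^n → ℝ be given by g(x) = Σ_j φ_j((Hx)_j, y_j) + Σ_c Σ_k ψ_c((W_c x)_k), where H, W_c are linear maps and all φ_j(·, y_j) and ψ_c are nonnegative, continuously differentiable, and piecewise polynomial with finitely many pieces. Then g attains its infimum on any polyhedron X ⊆ ℝ^n, i.e. argmin_{x ∈ X} g(x) ≠ ∅. No coercivity assumption is needed. -/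
open Filter Polynomial Topology

open Filter Polynomial

/-- Fourier–Motzkin: an asymptotically feasible finite system of linear
inequalities is feasible. -/
lemma fm_feasible : ∀ (n : ℕ) (ι : Type) [Fintype ι] (a : ι → Fin n → ℝ) (b : ι → ℝ),
    (∀ ε > (0:ℝ), ∃ x : Fin n → ℝ, ∀ i, ∑ j, a i j * x j ≤ b i + ε) →
    ∃ x : Fin n → ℝ, ∀ i, ∑ j, a i j * x j ≤ b i := by
  intro n
  induction n with
  | zero =>
      intro ι _ a b h
      refine ⟨fun _ => 0, fun i => ?_⟩
      simp only [Finset.univ_eq_empty, Finset.sum_empty]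
      refine le_of_forall_pos_le_add fun ε hε => ?_
      obtain ⟨x, hx⟩ := h ε hε
      simpa using hx i
  | succ n ih =>
      intro ι _ a b h
      classical
      set c : ι → ℝ := fun i => a i (Fin.last n) with hc
      set a' : ι → Fin n → ℝ := fun i j => a i j.castSucc with ha'
      have hxrepr : ∀ (x : Fin (n+1) → ℝ) (i : ι),
          ∑ j, a i j * x j = (∑ j, a' i j * x j.castSucc) + c i * x (Fin.last n) := by
        intro x i; rw [Fin.sum_univ_castSucc]
      set ιz := {i : ι // c i = 0}
      set ιp := {i : ι // 0 < c i}
      set ιm := {i : ι // c i < 0}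
      set A : (ιz ⊕ (ιp × ιm)) → Fin n → ℝ := Sum.elim (fun i => a' i.1)
        (fun q => fun j => c q.1.1 * a' q.2.1 j - c q.2.1 * a' q.1.1 j) with hA
      set B : (ιz ⊕ (ιp × ιm)) → ℝ := Sum.elim (fun i => b i.1)
        (fun q => c q.1.1 * b q.2.1 - c q.2.1 * b q.1.1) with hB
      set K : ℝ := 1 + ∑ q : ιp × ιm, (c q.1.1 - c q.2.1) with hK
      have hKpos : 0 < K := by
        have : (0:ℝ) ≤ ∑ q : ιp × ιm, (c q.1.1 - c q.2.1) :=
          Finset.sum_nonneg fun q _ => sub_nonneg.2 ((q.2.2.trans q.1.2).le)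
        simp only [hK]; linarith
      have hKge : ∀ q : ιp × ιm, c q.1.1 - c q.2.1 ≤ K := by
        intro q
        have h1 : c q.1.1 - c q.2.1 ≤ ∑ r : ιp × ιm, (c r.1.1 - c r.2.1) :=
          Finset.single_le_sum (f := fun r : ιp × ιm => c r.1.1 - c r.2.1)
            (fun r _ => sub_nonneg.2 ((r.2.2.trans r.1.2).le)) (Finset.mem_univ q)
        simp only [hK]; linarith
      have h' : ∀ ε > (0:ℝ), ∃ x' : Fin n → ℝ, ∀ i, ∑ j, A i j * x' j ≤ B i + ε := by
        intro ε hε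
        obtain ⟨x, hx⟩ := h (ε / K) (by positivity)
        have hxs : ∀ i, (∑ j, a' i j * x j.castSucc) + c i * x (Fin.last n) ≤ b i + ε / K :=
          fun i => le_trans (le_of_eq (hxrepr x i).symm) (hx i)
        have hK1 : (1:ℝ) ≤ K := by
          have : (0:ℝ) ≤ ∑ q : ιp × ιm, (c q.1.1 - c q.2.1) :=
            Finset.sum_nonneg fun q _ => sub_nonneg.2 ((q.2.2.trans q.1.2).le)
          simp only [hK]; linarith
        have hεK : ε / K ≤ ε := by
          rw [div_le_iff₀ hKpos]
          nlinarith [mul_le_mul_of_nonneg_left hK1 hε.le]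
        refine ⟨fun j => x j.castSucc, ?_⟩
        rintro (⟨i, hi⟩ | ⟨⟨i, hi⟩, ⟨j, hj⟩⟩)
        · have := hxs i
          simp only [hA, hB, Sum.elim_inl]
          rw [hi] at this; linarith
        · have h1 := hxs i
          have h2 := hxs j
          have e1 : (-c j) * ((∑ s, a' i s * x s.castSucc) + c i * x (Fin.last n)) ≤
              (-c j) * (b i + ε / K) := mul_le_mul_of_nonneg_left h1 (by linarith)
          have e2 : c i * ((∑ s, a' j s * x s.castSucc) + c j * x (Fin.last n)) ≤
              c i * (b j + ε / K) := mul_le_mul_of_nonneg_left h2 (le_of_lt hi)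
          simp only [hA, hB, Sum.elim_inr]
          have hsum2 : ∑ s, (c i * a' j s - c j * a' i s) * x s.castSucc
              = c i * (∑ s, a' j s * x s.castSucc) - c j * (∑ s, a' i s * x s.castSucc) := by
            rw [Finset.mul_sum, Finset.mul_sum, ← Finset.sum_sub_distrib]
            exact Finset.sum_congr rfl fun s _ => by ring
          have hKe : (c i - c j) * (ε / K) ≤ ε := by
            have hq := hKge (⟨⟨i, hi⟩, ⟨j, hj⟩⟩ : ιp × ιm)
            have h3 : (c i - c j) * (ε / K) ≤ K * (ε / K) :=
              mul_le_mul_of_nonneg_right hq (by positivity)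
            rw [mul_div_cancel₀ _ (ne_of_gt hKpos)] at h3
            linarith
          rw [hsum2]
          nlinarith
      obtain ⟨x', hx'⟩ := ih _ A B h'
      set S : ι → ℝ := fun i => ∑ j, a' i j * x' j with hS
      have hzero : ∀ i : ιz, S i.1 ≤ b i.1 := fun i => hx' (Sum.inl i)
      have hpair : ∀ (i : ιp) (j : ιm), c i.1 * S j.1 - c j.1 * S i.1 ≤
          c i.1 * b j.1 - c j.1 * b i.1 := by
        intro i j
        have hthis := hx' (Sum.inr (i, j))
        simp only [hA, hB, Sum.elim_inr] at hthis
        have hsum2 : ∑ s, (c i.1 * a' j.1 s - c j.1 * a' i.1 s) * x' s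
            = c i.1 * S j.1 - c j.1 * S i.1 := by
          simp only [hS]
          rw [Finset.mul_sum, Finset.mul_sum, ← Finset.sum_sub_distrib]
          exact Finset.sum_congr rfl fun s _ => by ring
        rw [hsum2] at hthis; exact hthis
      have fact1 : ∀ (i : ιp) (t : ℝ), t ≤ (b i.1 - S i.1) / c i.1 →
          S i.1 + c i.1 * t ≤ b i.1 := by
        intro i t ht
        rw [le_div_iff₀ i.2] at ht
        nlinarith [i.2]
      have fact2 : ∀ (j : ιm) (t : ℝ), (S j.1 - b j.1) / (-c j.1) ≤ t →
          S j.1 + c j.1 * t ≤ b j.1 := by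
        intro j t ht
        rw [div_le_iff₀ (by have := j.2; linarith : (0:ℝ) < -c j.1)] at ht
        nlinarith [j.2]
      have fact3 : ∀ (i : ιp) (j : ιm),
          (S j.1 - b j.1) / (-c j.1) ≤ (b i.1 - S i.1) / c i.1 := by
        intro i j
        rw [div_le_div_iff₀ (by have := j.2; linarith : (0:ℝ) < -c j.1) i.2]
        have := hpair i j
        nlinarith [i.2, j.2]
      have main : ∃ t : ℝ, (∀ i : ιp, S i.1 + c i.1 * t ≤ b i.1) ∧
          (∀ j : ιm, S j.1 + c j.1 * t ≤ b j.1) := by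
        rcases isEmpty_or_nonempty ιm with hm | hm
        · rcases isEmpty_or_nonempty ιp with hp | hp
          · exact ⟨0, fun i => (hp.false i).elim, fun j => (hm.false j).elim⟩
          · refine ⟨Finset.univ.inf' Finset.univ_nonempty
              (fun i : ιp => (b i.1 - S i.1) / c i.1), fun i => ?_, fun j => (hm.false j).elim⟩
            exact fact1 i _ (Finset.inf'_le _ (Finset.mem_univ i))
        · refine ⟨Finset.univ.sup' Finset.univ_nonempty
            (fun j : ιm => (S j.1 - b j.1) / (-c j.1)), fun i => ?_, fun j => ?_⟩
          · exact fact1 i _ (Finset.sup'_le _ _ fun j _ => fact3 i j)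
          · exact fact2 j _ (Finset.le_sup' (fun j : ιm => (S j.1 - b j.1) / (-c j.1)) (Finset.mem_univ j))
      obtain ⟨t, htp, htm⟩ := main
      refine ⟨Fin.snoc x' t, fun i => ?_⟩
      have hval : ∑ j, a i j * (Fin.snoc x' t : Fin (n+1) → ℝ) j = S i + c i * t := by
        rw [hxrepr]
        simp [hS, Fin.snoc_castSucc, Fin.snoc_last]
      rw [hval]
      rcases lt_trichotomy (c i) 0 with hlt | heq | hgt
      · exact htm ⟨i, hlt⟩
      · have := hzero ⟨i, heq⟩; rw [heq]; simpa using this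
      · exact htp ⟨i, hgt⟩
open Filter Polynomial Topology

lemma poly_const_atTop {p : Polynomial ℝ} {u : ℕ → ℝ} {β : ℝ}
    (hu : Tendsto u atTop atTop)
    (h : Tendsto (fun t => p.eval (u t)) atTop (𝓝 β)) : ∀ s, p.eval s = β := by
  have hdeg : p.degree ≤ 0 := by
    by_contra hd
    push_neg at hd
    have h1 : Tendsto (fun t => |p.eval (u t)|) atTop atTop :=
      (Polynomial.abs_tendsto_atTop p hd).comp hu
    exact not_tendsto_atTop_of_tendsto_nhds h.abs h1
  intro s
  have hconst : ∀ x : ℝ, p.eval x = p.coeff 0 := by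
    intro x
    conv_lhs => rw [Polynomial.eq_C_of_degree_le_zero hdeg]
    simp
  have : Tendsto (fun _ : ℕ => p.coeff 0) atTop (𝓝 β) := by
    simpa only [hconst] using h
  rw [hconst s, tendsto_nhds_unique this tendsto_const_nhds]

lemma poly_const_atBot {p : Polynomial ℝ} {u : ℕ → ℝ} {β : ℝ}
    (hu : Tendsto u atTop atBot)
    (h : Tendsto (fun t => p.eval (u t)) atTop (𝓝 β)) : ∀ s, p.eval s = β := by
  have key := poly_const_atTop (p := p.comp (-Polynomial.X)) (u := fun t => -(u t)) (β := β)
    (by exact tendsto_neg_atBot_iff.mp (by simpa using hu)) ?_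
  · intro s
    have := key (-s)
    simpa using this
  · simpa [Polynomial.eval_comp] using h

/-- A function `f : ℝ → ℝ` is piecewise polynomial with finitely many pieces:
there are finitely many closed intervals (closed convex subsets of `ℝ`) covering `ℝ`
on each of which `f` coincides with a polynomial. -/
def PiecewisePolyFin (f : ℝ → ℝ) : Prop :=
  ∃ (N : ℕ) (I : Fin N → Set ℝ) (p : Fin N → Polynomial ℝ),
    (⋃ i, I i) = Set.univ ∧ (∀ i, IsClosed (I i) ∧ Convex ℝ (I i)) ∧
    ∀ i, ∀ x ∈ I i, f x = (p i).eval x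

theorem stmt7 (n m N l : ℕ)
    (H : (Fin n → ℝ) →ₗ[ℝ] (Fin m → ℝ))
    (W : Fin N → (Fin n → ℝ) →ₗ[ℝ] (Fin n → ℝ))
    (φ : Fin m → ℝ → ℝ) (ψ : Fin N → ℝ → ℝ)
    (hφ : ∀ j, (∀ t, 0 ≤ φ j t) ∧ ContDiff ℝ 1 (φ j) ∧ PiecewisePolyFin (φ j))
    (hψ : ∀ c, (∀ t, 0 ≤ ψ c t) ∧ ContDiff ℝ 1 (ψ c) ∧ PiecewisePolyFin (ψ c))
    (A : Matrix (Fin l) (Fin n) ℝ) (b : Fin l → ℝ)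
    (hX : {x : Fin n → ℝ | A.mulVec x ≤ b}.Nonempty) :
    ∃ x ∈ {x : Fin n → ℝ | A.mulVec x ≤ b},
      ∀ z ∈ {x : Fin n → ℝ | A.mulVec x ≤ b},
        (∑ j, φ j ((H x) j)) + ∑ c, ∑ i, ψ c ((W c x) i) ≤
        (∑ j, φ j ((H z) j)) + ∑ c, ∑ i, ψ c ((W c z) i) := by
  classical
  set X := {x : Fin n → ℝ | A.mulVec x ≤ b} with hXdef
  set ℓ : (Fin m ⊕ Fin N × Fin n) → ((Fin n → ℝ) →ₗ[ℝ] ℝ) :=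
    Sum.elim (fun j => (LinearMap.proj j).comp H)
      (fun q => (LinearMap.proj q.2).comp (W q.1)) with hℓ
  set f : (Fin m ⊕ Fin N × Fin n) → ℝ → ℝ := Sum.elim φ (fun q => ψ q.1) with hf
  set g : (Fin n → ℝ) → ℝ := fun x => ∑ k, f k (ℓ k x) with hgdef
  have hg : ∀ x, (∑ j, φ j ((H x) j)) + ∑ c, ∑ i, ψ c ((W c x) i) = g x := by
    intro x
    simp only [hgdef, hf, hℓ, Fintype.sum_sum_type, Sum.elim_inl, Sum.elim_inr,
      LinearMap.comp_apply, LinearMap.proj_apply]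
    rw [Fintype.sum_prod_type]
  have hf0 : ∀ k t, 0 ≤ f k t := by
    rintro (j | q) t
    · exact (hφ j).1 t
    · exact (hψ q.1).1 t
  have hfc : ∀ k, Continuous (f k) := by
    rintro (j | q)
    · exact (hφ j).2.1.continuous
    · exact (hψ q.1).2.1.continuous
  have hfp' : ∀ k, ∃ (M : ℕ) (I : Fin M → Set ℝ) (p : Fin M → Polynomial ℝ),
      (⋃ i, I i) = Set.univ ∧ (∀ i, IsClosed (I i) ∧ Convex ℝ (I i)) ∧
      ∀ i, ∀ x ∈ I i, f k x = (p i).eval x := by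
    rintro (j | q)
    · exact (hφ j).2.2
    · exact (hψ q.1).2.2
  choose Nk I P hIcov hIprop hIeq using hfp'
  have hg0 : ∀ x, 0 ≤ g x := fun x => Finset.sum_nonneg fun k _ => hf0 k _
  have hbdd : ∀ s : Set (Fin n → ℝ), BddBelow (g '' s) := by
    intro s; exact ⟨0, by rintro _ ⟨x, _, rfl⟩; exact hg0 x⟩
  set α := sInf (g '' X) with hα
  have himgne : (g '' X).Nonempty := hX.image g
  have hαle : ∀ x ∈ X, α ≤ g x := fun x hx => csInf_le (hbdd X) ⟨x, hx, rfl⟩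
  -- cells
  set C : (∀ k, Fin (Nk k)) → Set (Fin n → ℝ) :=
    fun σ => {x | x ∈ X ∧ ∀ k, ℓ k x ∈ I k (σ k)} with hCdef
  have hmem : ∀ x ∈ X, ∃ σ, x ∈ C σ := by
    intro x hx
    have hex : ∀ k, ∃ i, ℓ k x ∈ I k i := by
      intro k
      have h1 : ℓ k x ∈ ⋃ i, I k i := by rw [hIcov k]; trivial
      exact Set.mem_iUnion.mp h1
    choose σ hσ using hex
    exact ⟨σ, hx, hσ⟩
  have hcell : ∃ σ, (C σ).Nonempty ∧ sInf (g '' C σ) ≤ α := by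
    by_contra hcon
    push_neg at hcon
    set T : Finset (∀ k, Fin (Nk k)) := Finset.univ.filter (fun σ => (C σ).Nonempty) with hT
    obtain ⟨x₀, hx₀⟩ := hX
    obtain ⟨σ₀, hσ₀⟩ := hmem x₀ hx₀
    have hTne : T.Nonempty := by
      refine ⟨σ₀, ?_⟩
      simp only [hT, Finset.mem_filter, Finset.mem_univ, true_and]
      exact ⟨x₀, hσ₀⟩
    have hlb : ∀ x ∈ X, T.inf' hTne (fun σ => sInf (g '' C σ)) ≤ g x := by
      intro x hx
      obtain ⟨σ, hσ⟩ := hmem x hx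
      have hmemT : σ ∈ T := by
        simp only [hT, Finset.mem_filter, Finset.mem_univ, true_and]
        exact ⟨x, hσ⟩
      have h1 : T.inf' hTne (fun σ => sInf (g '' C σ)) ≤ sInf (g '' C σ) :=
        Finset.inf'_le _ hmemT
      exact h1.trans (csInf_le (hbdd _) ⟨x, hσ, rfl⟩)
    have hlb2 : T.inf' hTne (fun σ => sInf (g '' C σ)) ≤ α := by
      apply le_csInf himgne
      rintro _ ⟨x, hx, rfl⟩
      exact hlb x hx
    have hgt : α < T.inf' hTne (fun σ => sInf (g '' C σ)) := by
      rw [Finset.lt_inf'_iff]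
      intro σ hσT
      refine hcon σ ?_
      simpa only [hT, Finset.mem_filter, Finset.mem_univ, true_and] using hσT
    linarith
  obtain ⟨σ, hCne, hCinf⟩ := hcell
  -- minimizing sequence in the cell
  have hseq : ∀ t : ℕ, ∃ x, x ∈ C σ ∧ g x < α + 1 / ((t : ℝ) + 1) := by
    intro t
    have hpos : (0:ℝ) < 1 / ((t : ℝ) + 1) := by positivity
    have h1 : sInf (g '' C σ) < α + 1 / ((t : ℝ) + 1) := lt_of_le_of_lt hCinf (by linarith)
    obtain ⟨_, ⟨x, hx, rfl⟩, hy⟩ := exists_lt_of_csInf_lt (hCne.image g) h1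
    exact ⟨x, hx, hy⟩
  choose xs hxC hxlt using hseq
  -- compactness extraction
  set F : ℕ → (((Fin m ⊕ Fin N × Fin n) → ℝ) × ((Fin m ⊕ Fin N × Fin n) → ℝ)) :=
    fun t => (fun k => f k (ℓ k (xs t)), fun k => Real.arctan (ℓ k (xs t))) with hF
  have hFmem : ∀ t, F t ∈ (Set.univ.pi fun _ => Set.Icc (0:ℝ) (α+1)) ×ˢ
      (Set.univ.pi fun _ => Set.Icc (-(Real.pi/2)) (Real.pi/2)) := by
    intro t
    constructor
    · intro k _
      refine ⟨hf0 k _, ?_⟩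
      have h1 : f k (ℓ k (xs t)) ≤ g (xs t) :=
        Finset.single_le_sum (f := fun k' => f k' (ℓ k' (xs t)))
          (fun k' _ => hf0 k' _) (Finset.mem_univ k)
      have h2 : (1:ℝ) / ((t : ℝ) + 1) ≤ 1 := by
        rw [div_le_one (by positivity)]; linarith [Nat.cast_nonneg (α := ℝ) t]
      have := hxlt t
      simp only [hF]
      linarith
    · intro k _
      exact ⟨(Real.neg_pi_div_two_lt_arctan _).le, (Real.arctan_lt_pi_div_two _).le⟩
  obtain ⟨a, hamem, φs, hφmono, hconv⟩ :=
    (((isCompact_univ_pi fun _ => isCompact_Icc).prod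
      (isCompact_univ_pi fun _ => isCompact_Icc))).tendsto_subseq hFmem
  set y : ℕ → (Fin n → ℝ) := fun t => xs (φs t) with hy
  set u : (Fin m ⊕ Fin N × Fin n) → ℕ → ℝ := fun k t => ℓ k (y t) with hu
  have hyC : ∀ t, y t ∈ C σ := fun t => hxC (φs t)
  have hyX : ∀ t, y t ∈ X := fun t => (hyC t).1
  have huI : ∀ k t, u k t ∈ I k (σ k) := fun k t => (hyC t).2 k
  have hβ : ∀ k, Tendsto (fun t => f k (u k t)) atTop (𝓝 (a.1 k)) := by
    intro k
    have h1 : Tendsto (fun t => (F (φs t)).1) atTop (𝓝 a.1) :=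
      ((continuous_fst.tendsto a).comp hconv)
    exact (tendsto_pi_nhds.mp h1) k
  have harc : ∀ k, Tendsto (fun t => Real.arctan (u k t)) atTop (𝓝 (a.2 k)) := by
    intro k
    have h1 : Tendsto (fun t => (F (φs t)).2) atTop (𝓝 a.2) :=
      ((continuous_snd.tendsto a).comp hconv)
    exact (tendsto_pi_nhds.mp h1) k
  have hgyα : Tendsto (fun t => g (y t)) atTop (𝓝 α) := by
    have hup : Tendsto (fun t : ℕ => α + 1 / ((t : ℝ) + 1)) atTop (𝓝 (α + 0)) :=
      tendsto_const_nhds.add tendsto_one_div_add_atTop_nhds_zero_nat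
    rw [add_zero] at hup
    refine tendsto_of_tendsto_of_tendsto_of_le_of_le tendsto_const_nhds hup
      (fun t => hαle _ (hyX t)) (fun t => ?_)
    have h1 := hxlt (φs t)
    have h2 : (1:ℝ) / ((φs t : ℝ) + 1) ≤ 1 / ((t : ℝ) + 1) := by
      apply one_div_le_one_div_of_le (by positivity)
      have h3 : (t : ℝ) ≤ (φs t : ℝ) := Nat.cast_le.mpr (hφmono.le_apply (x := t))
      linarith
    simp only [hy]
    linarith
  have hsumβ : ∑ k, a.1 k = α := by
    refine tendsto_nhds_unique (tendsto_finset_sum _ fun k _ => hβ k) ?_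
    exact hgyα
  -- per-coordinate constraint data
  have hmain : ∀ k, ∃ (w : Bool → Fin n → ℝ) (r : Bool → ℝ),
      (∀ ε > (0:ℝ), ∀ᶠ t in atTop, ∀ s : Bool, ∑ j, w s j * (y t) j ≤ r s + ε) ∧
      (∀ z : Fin n → ℝ, (∀ s : Bool, ∑ j, w s j * z j ≤ r s) →
        ℓ k z ∈ I k (σ k) ∧ f k (ℓ k z) = a.1 k) := by
    intro k
    set vec : Fin n → ℝ := fun i => ℓ k (fun j' => if i = j' then 1 else 0) with hvecdef
    have hvec : ∀ z, ∑ j, vec j * z j = ℓ k z := by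
      intro z
      rw [LinearMap.pi_apply_eq_sum_univ (ℓ k) z]
      exact Finset.sum_congr rfl fun j _ => by rw [smul_eq_mul, mul_comm]
    have hnegvec : ∀ z, ∑ j, (-vec) j * z j = -(ℓ k z) := by
      intro z
      rw [← hvec z, ← Finset.sum_neg_distrib]
      exact Finset.sum_congr rfl fun j _ => by simp
    have hLmem : a.2 k ∈ Set.Icc (-(Real.pi/2)) (Real.pi/2) := hamem.2 k (Set.mem_univ k)
    by_cases hB : |a.2 k| < Real.pi/2
    · -- bounded coordinate
      have hcos : Real.cos (a.2 k) ≠ 0 :=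
        ne_of_gt (Real.cos_pos_of_mem_Ioo ⟨(abs_lt.1 hB).1, (abs_lt.1 hB).2⟩)
      have htan : Tendsto (fun t => u k t) atTop (𝓝 (Real.tan (a.2 k))) := by
        have h1 : Tendsto (fun t => Real.tan (Real.arctan (u k t))) atTop
            (𝓝 (Real.tan (a.2 k))) := ((Real.continuousAt_tan.2 hcos).tendsto).comp (harc k)
        simpa [Real.tan_arctan] using h1
      set τ := Real.tan (a.2 k) with hτ
      have hτI : τ ∈ I k (σ k) :=
        (hIprop k (σ k)).1.mem_of_tendsto htan (Filter.Eventually.of_forall fun t => huI k t)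
      have hfτ : f k τ = a.1 k :=
        tendsto_nhds_unique (((hfc k).tendsto τ).comp htan) (hβ k)
      refine ⟨fun s => if s then vec else -vec, fun s => if s then τ else -τ, ?_, ?_⟩
      · intro ε hε
        have h2 : ∀ᶠ t in atTop, u k t ∈ Set.Ioo (τ - ε) (τ + ε) :=
          htan (Ioo_mem_nhds (by linarith) (by linarith))
        filter_upwards [h2] with t ht s
        cases s
        · simp only [Bool.false_eq_true, if_false]
          rw [hnegvec]
          have := ht.1
          simp only [hu] at this ⊢
          linarith
        · simp only [if_true]
          rw [hvec]
          have := ht.2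
          simp only [hu] at this ⊢
          linarith
      · intro z hz
        have h1 := hz true
        have h2 := hz false
        simp only [if_true, Bool.false_eq_true, if_false] at h1 h2
        rw [hvec] at h1
        rw [hnegvec] at h2
        have heq : ℓ k z = τ := le_antisymm h1 (by linarith)
        rw [heq]
        exact ⟨hτI, hfτ⟩
    · -- unbounded coordinate
      have habs : |a.2 k| = Real.pi/2 :=
        le_antisymm (abs_le.2 ⟨hLmem.1, hLmem.2⟩) (not_lt.1 hB)
      have hcases : a.2 k = Real.pi/2 ∨ a.2 k = -(Real.pi/2) :=
        (abs_eq (by positivity)).mp habs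
      rcases hcases with hcase | hcase
      · -- tends to +∞
        have hatTop : Tendsto (u k) atTop atTop := by
          rw [tendsto_atTop]
          intro R
          have h1 : ∀ᶠ t in atTop, Real.arctan R < Real.arctan (u k t) := by
            apply (harc k).eventually
            rw [hcase]
            exact eventually_gt_nhds (Real.arctan_lt_pi_div_two R)
          filter_upwards [h1] with t ht
          exact (Real.arctan_strictMono.lt_iff_lt.1 ht).le
        have hmemI : ∀ r, u k 0 ≤ r → r ∈ I k (σ k) := by
          intro r hr
          obtain ⟨t, ht⟩ := (hatTop.eventually (eventually_ge_atTop r)).exists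
          have hIcc : Set.Icc (u k 0) (u k t) ⊆ I k (σ k) := by
            rw [← segment_eq_Icc (hr.trans ht)]
            exact Convex.segment_subset (hIprop k (σ k)).2 (huI k 0) (huI k t)
          exact hIcc ⟨hr, ht⟩
        have hevalconst : ∀ s, (P k (σ k)).eval s = a.1 k := by
          apply poly_const_atTop hatTop
          have heq : ∀ t, f k (u k t) = (P k (σ k)).eval (u k t) :=
            fun t => hIeq k (σ k) _ (huI k t)
          have := hβ k
          simp only [heq] at this
          exact this
        refine ⟨fun _ => -vec, fun _ => -(u k 0), ?_, ?_⟩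
        · intro ε hε
          have h1 : ∀ᶠ t in atTop, u k 0 ≤ u k t := hatTop.eventually (eventually_ge_atTop _)
          filter_upwards [h1] with t ht s
          rw [hnegvec]
          simp only [hu] at ht ⊢
          linarith
        · intro z hz
          have h1 := hz true
          rw [hnegvec] at h1
          change -(ℓ k z) ≤ -(u k 0) at h1
          have h2 : u k 0 ≤ ℓ k z := by linarith
          refine ⟨hmemI _ h2, ?_⟩
          rw [hIeq k (σ k) _ (hmemI _ h2), hevalconst]
      · -- tends to -∞
        have hatBot : Tendsto (u k) atTop atBot := by
          rw [tendsto_atBot]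
          intro R
          have h0 : ∀ᶠ yv in 𝓝 (a.2 k), yv < Real.arctan R := by
            rw [hcase]
            exact eventually_lt_nhds (Real.neg_pi_div_two_lt_arctan R)
          have h1 : ∀ᶠ t in atTop, Real.arctan (u k t) < Real.arctan R :=
            (harc k).eventually h0
          filter_upwards [h1] with t ht
          exact (Real.arctan_strictMono.lt_iff_lt.1 ht).le
        have hmemI : ∀ r, r ≤ u k 0 → r ∈ I k (σ k) := by
          intro r hr
          obtain ⟨t, ht⟩ := (hatBot.eventually (eventually_le_atBot r)).exists
          have hIcc : Set.Icc (u k t) (u k 0) ⊆ I k (σ k) := by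
            rw [← segment_eq_Icc (ht.trans hr)]
            exact Convex.segment_subset (hIprop k (σ k)).2 (huI k t) (huI k 0)
          exact hIcc ⟨ht, hr⟩
        have hevalconst : ∀ s, (P k (σ k)).eval s = a.1 k := by
          apply poly_const_atBot hatBot
          have heq : ∀ t, f k (u k t) = (P k (σ k)).eval (u k t) :=
            fun t => hIeq k (σ k) _ (huI k t)
          have := hβ k
          simp only [heq] at this
          exact this
        refine ⟨fun _ => vec, fun _ => u k 0, ?_, ?_⟩
        · intro ε hε
          have h1 : ∀ᶠ t in atTop, u k t ≤ u k 0 := hatBot.eventually (eventually_le_atBot _)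
          filter_upwards [h1] with t ht s
          rw [hvec]
          simp only [hu] at ht ⊢
          linarith
        · intro z hz
          have h1 := hz true
          rw [hvec] at h1
          refine ⟨hmemI _ h1, ?_⟩
          rw [hIeq k (σ k) _ (hmemI _ h1), hevalconst]
  choose w r hwapprox hwdec using hmain
  -- assemble the linear system and apply Fourier–Motzkin
  set arow : (Fin l ⊕ ((Fin m ⊕ Fin N × Fin n) × Bool)) → Fin n → ℝ :=
    Sum.elim (fun i => A i) (fun q => w q.1 q.2) with harow
  set rrow : (Fin l ⊕ ((Fin m ⊕ Fin N × Fin n) × Bool)) → ℝ :=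
    Sum.elim b (fun q => r q.1 q.2) with hrrow
  have happrox : ∀ ε > (0:ℝ), ∃ x : Fin n → ℝ, ∀ i, ∑ j, arow i j * x j ≤ rrow i + ε := by
    intro ε hε
    have hk : ∀ᶠ t in atTop, ∀ k, ∀ s : Bool, ∑ j, w k s j * (y t) j ≤ r k s + ε := by
      rw [eventually_all]
      intro k
      exact hwapprox k ε hε
    obtain ⟨t, ht⟩ := hk.exists
    refine ⟨y t, ?_⟩
    rintro (i | q)
    · have h1 : A.mulVec (y t) i ≤ b i := hyX t i
      have h2 : A.mulVec (y t) i = ∑ j, A i j * (y t) j := by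
        simp [Matrix.mulVec, dotProduct]
      simp only [harow, hrrow, Sum.elim_inl]
      rw [← h2]
      linarith
    · exact ht q.1 q.2
  obtain ⟨xstar, hxstar⟩ := fm_feasible n _ arow rrow happrox
  have hxstarX : xstar ∈ X := by
    intro i
    have h1 := hxstar (Sum.inl i)
    simp only [harow, hrrow, Sum.elim_inl] at h1
    have h2 : A.mulVec xstar i = ∑ j, A i j * xstar j := by
      simp [Matrix.mulVec, dotProduct]
    rw [h2]
    exact h1
  have hxstark : ∀ k, ℓ k xstar ∈ I k (σ k) ∧ f k (ℓ k xstar) = a.1 k :=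
    fun k => hwdec k xstar (fun s => hxstar (Sum.inr (k, s)))
  have hgxstar : g xstar = α := by
    rw [hgdef]
    simp only
    rw [← hsumβ]
    exact Finset.sum_congr rfl fun k _ => (hxstark k).2
  refine ⟨xstar, hxstarX, ?_⟩
  intro z hz
  rw [hg xstar, hg z, hgxstar]
  exact hαle z hz
end

section
/- Let H be an invertible matrix in ℝ^{n×n} and let A ∈ ℝ^{n×n} be symmetric positive semi-definite. Then C = H^T H + A is invertible, and ‖C^{-1} H^T‖ ≤ ‖H^{-1}‖ in the operator norm. -/
/-!
Since `C = Hᴴ H + A` is Hermitian, `‖C⁻¹ Hᴴ‖ = ‖H C⁻¹‖`. For `y = C⁻¹ x` we have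
`‖H y‖² ≤ ⟪C y, y⟫ = ⟪x, y⟫ = ⟪H⁻ᴴ x, H y⟫ ≤ ‖H⁻¹‖ ‖x‖ ‖H y‖`, hence `‖H C⁻¹ x‖ ≤ ‖H⁻¹‖ ‖x‖`.
-/

namespace ContinuousLinearMap

open RCLike
open scoped InnerProductSpace InnerProduct

variable {𝕜 E F : Type*} [RCLike 𝕜]
  [NormedAddCommGroup E] [InnerProductSpace 𝕜 E] [CompleteSpace E]
  [NormedAddCommGroup F] [InnerProductSpace 𝕜 F] [CompleteSpace F]

theorem norm_apply_le_of_sq_le_re_inner {T : E →L[𝕜] F} {L : F →L[𝕜] E}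
    (hLT : L ∘L T = .id 𝕜 E) {x y : E} (h : ‖T y‖ ^ 2 ≤ re ⟪x, y⟫_𝕜) :
    ‖T y‖ ≤ ‖L‖ * ‖x‖ := by
  have key : ‖T y‖ ^ 2 ≤ ‖L‖ * ‖x‖ * ‖T y‖ := calc
    ‖T y‖ ^ 2 ≤ re ⟪x, y⟫_𝕜 := h
    _ = re ⟪(L†) x, T y⟫_𝕜 := by rw [adjoint_inner_left, ← comp_apply, hLT, id_apply]
    _ ≤ ‖(L†) x‖ * ‖T y‖ := re_inner_le_norm _ _
    _ ≤ ‖L‖ * ‖x‖ * ‖T y‖ := by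
      gcongr
      simpa using (L†).le_opNorm x
  nlinarith [norm_nonneg (T y), mul_nonneg (norm_nonneg L) (norm_nonneg x)]

theorem opNorm_comp_le_of_adjoint_comp_self_le {T : E →L[𝕜] F} {L : F →L[𝕜] E}
    (hLT : L ∘L T = .id 𝕜 E) {C R : E →L[𝕜] E} (hTC : T† ∘L T ≤ C) (hCR : C ∘L R = .id 𝕜 E) :
    ‖T ∘L R‖ ≤ ‖L‖ :=
  opNorm_le_bound _ (norm_nonneg _) fun x => by
    refine norm_apply_le_of_sq_le_re_inner hLT ?_
    have := hTC.re_inner_nonneg_left (R x)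
    rwa [sub_apply, inner_sub_left, map_sub, ← comp_apply C, hCR, id_apply,
      ← apply_norm_sq_eq_inner_adjoint_left, sub_nonneg] at this

end ContinuousLinearMap

namespace Matrix

open ContinuousLinearMap
open scoped ComplexOrder

variable {𝕜 ι : Type*} [RCLike 𝕜] [Fintype ι] [DecidableEq ι]

theorem isPositive_toEuclideanCLM {A : Matrix ι ι 𝕜} (hA : A.PosSemidef) :
    (toEuclideanCLM (𝕜 := 𝕜) A).IsPositive :=
  (isPositive_toLinearMap_iff _).mp (isPositive_toEuclideanLin_iff.mpr hA)

theorem posDef_conjTranspose_mul_self_add {H A : Matrix ι ι 𝕜} (hH : IsUnit H)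
    (hA : A.PosSemidef) : (Hᴴ * H + A).PosDef :=
  (PosDef.conjTranspose_mul_self H (mulVec_injective_iff_isUnit.mpr hH)).add_posSemidef hA

theorem norm_toEuclideanCLM_inv_add_mul_conjTranspose_le {H A : Matrix ι ι 𝕜} (hH : IsUnit H)
    (hA : A.PosSemidef) :
    ‖toEuclideanCLM (𝕜 := 𝕜) ((Hᴴ * H + A)⁻¹ * Hᴴ)‖ ≤ ‖toEuclideanCLM (𝕜 := 𝕜) H⁻¹‖ := by
  have hC := posDef_conjTranspose_mul_self_add hH hA
  rw [← norm_star, ← map_star, star_eq_conjTranspose, conjTranspose_mul,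
    conjTranspose_conjTranspose, conjTranspose_nonsing_inv, hC.1.eq, map_mul, mul_def]
  refine opNorm_comp_le_of_adjoint_comp_self_le (L := toEuclideanCLM (𝕜 := 𝕜) H⁻¹)
    (C := toEuclideanCLM (𝕜 := 𝕜) (Hᴴ * H + A)) ?_ ?_ ?_
  · rw [← mul_def, ← map_mul, nonsing_inv_mul _ ((isUnit_iff_isUnit_det _).mp hH), map_one,
      one_def]
  · rw [le_def, ← star_eq_adjoint, ← map_star, ← mul_def, ← map_mul, ← map_sub,
      star_eq_conjTranspose, add_sub_cancel_left]
    exact isPositive_toEuclideanCLM hA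
  · rw [← mul_def, ← map_mul, mul_nonsing_inv _ ((isUnit_iff_isUnit_det _).mp hC.isUnit),
      map_one, one_def]

end Matrix

open Matrix

theorem stmt17 (n : ℕ) (H A : Matrix (Fin n) (Fin n) ℝ)
    (hH : IsUnit H) (hA : A.PosSemidef) :
    IsUnit (Hᵀ * H + A) ∧
    ‖Matrix.toEuclideanCLM (𝕜 := ℝ) ((Hᵀ * H + A)⁻¹ * Hᵀ)‖ ≤
      ‖Matrix.toEuclideanCLM (𝕜 := ℝ) H⁻¹‖ := by
  rw [← conjTranspose_eq_transpose_of_trivial]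
  exact ⟨(posDef_conjTranspose_mul_self_add hH hA).isUnit,
    norm_toEuclideanCLM_inv_add_mul_conjTranspose_le hH hA⟩
end
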